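/- arXiv:0805.1088 — 2 statements merged into one kernel-verified Lean document; each statement's English description precedes it below -/
import Mathlib

section
/- For all positive integers K and N and every i ∈ {1,…,N}, the subgraph of the enhanced conflict graph G_{K,N} induced by the vertex set consisting of all broadcast vertices b_{kj} (k ∈ {1,…,K}, j ∈ {1,…,N}) together with the unicast vertices u_{ki} (k ∈ {1,…,K}) destined to output i is a perfect graph. -/
/-!
Restricted to the broadcast vertices and the unicast vertices at output `i`, the vertices at each
output form a clique, broadcast vertices at distinct outputs are never adjacent, and a broadcast
vertex `b_{kj}` with `j ≠ i` has at most one neighbour at output `i`, namely `u_{ki}`. This shape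
is inherited by induced subgraphs, so it suffices to colour such a graph with `ω` colours. Colour
the hub clique at output `i` injectively, then every other output clique injectively while
avoiding, at each vertex, the colour of its hub neighbour. These forbidden colours are pairwise
distinct, so Hall's theorem applies: each clique has at most `ω` vertices, and a vertex with a hub
neighbour lies on an edge, whence `ω ≥ 2` and it still has an allowed colour.
-/

open SimpleGraph Pointwise

/-- Vertex set of the enhanced conflict graph `G_{K,N}`: `(false, i, j)` is the unicast vertex
`u_{ij}` (input `i`, output `j`), and `(true, i, j)` is the broadcast (subflow) vertex `b_{ij}`. -/
abbrev CGVert (K N : ℕ) := Bool × Fin K × Fin N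

/-- The enhanced conflict graph `G_{K,N}` of a `K × N` switch with unicast and broadcast traffic:
two distinct vertices are adjacent iff they share an input and at least one of them is a unicast,
or they share an output and come from different inputs. -/
def ECG (K N : ℕ) : SimpleGraph (CGVert K N) where
  Adj v w := v ≠ w ∧
    ((v.2.1 = w.2.1 ∧ (v.1 = false ∨ w.1 = false)) ∨
     (v.2.2 = w.2.2 ∧ v.2.1 ≠ w.2.1))
  symm := by
    constructor
    rintro v w ⟨hne, h⟩
    refine ⟨hne.symm, ?_⟩
    rcases h with ⟨h1, h2⟩ | ⟨h1, h2⟩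
    · exact Or.inl ⟨h1.symm, h2.symm⟩
    · exact Or.inr ⟨h1.symm, h2.symm⟩
  loopless := ⟨fun v h => h.1 rfl⟩

/-- The stable set polytope of a graph: the convex hull of the 0/1 indicator vectors of the
independent (stable) sets. -/
def STAB {V : Type*} (G : SimpleGraph V) : Set (V → ℝ) :=
  convexHull ℝ {x | ∃ S : Set V, (∀ v ∈ S, ∀ w ∈ S, ¬ G.Adj v w) ∧
    x = S.indicator (fun _ => (1 : ℝ))}

/-- The fractional stable set polytope of a graph: nonnegative vectors whose sum over every
clique is at most `1`. -/
def QSTAB {V : Type*} (G : SimpleGraph V) : Set (V → ℝ) :=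
  {x | (∀ v, 0 ≤ x v) ∧ ∀ Q : Finset V, G.IsClique (Q : Set V) → ∑ v ∈ Q, x v ≤ 1}

/-- A graph is perfect if every induced subgraph has chromatic number equal to its clique
number. -/
def SimpleGraph.IsPerfect {V : Type*} (G : SimpleGraph V) : Prop :=
  ∀ S : Set V, (G.induce S).chromaticNumber = ((G.induce S).cliqueNum : ℕ∞)

/-- A graph has an odd hole if some induced subgraph is a chordless cycle of odd length at
least 5. -/
def SimpleGraph.HasOddHole {V : Type*} (G : SimpleGraph V) : Prop :=
  ∃ (n : ℕ) (S : Set V), 5 ≤ n ∧ Odd n ∧ Nonempty (G.induce S ≃g cycleGraph n)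

open Finset in
theorem Finset.exists_injOn_forall_notMem {α β : Type*} [Fintype β] [DecidableEq β]
    [Nonempty β] {s : Finset α} (F : α → Finset β) (hs : #s ≤ Fintype.card β)
    (hF : ∀ a ∈ s, #(F a) < Fintype.card β) (hdisj : (s : Set α).PairwiseDisjoint F) :
    ∃ g : α → β, Set.InjOn g s ∧ ∀ a ∈ s, g a ∉ F a := by
  classical
  have hall : ∀ u : Finset s, #u ≤ #(u.biUnion fun a => univ \ F a) := by
    intro u
    rcases u.eq_empty_or_nonempty with rfl | ⟨a, ha⟩
    · simp
    by_cases hu : #u ≤ 1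
    · calc #u ≤ 1 := hu
        _ ≤ #(univ \ F a) := by
          rw [card_sdiff_of_subset (subset_univ _), card_univ]
          have := hF a a.2
          omega
        _ ≤ _ := card_le_card (subset_biUnion_of_mem (fun a : s => univ \ F a) ha)
    · obtain ⟨a, ha, a', ha', hne⟩ := one_lt_card.mp (not_le.mp hu)
      have hcover : u.biUnion (fun a => univ \ F a) = univ := eq_univ_of_forall fun b => by
        simp only [mem_biUnion, mem_sdiff, mem_univ, true_and]
        by_contra! h
        exact disjoint_left.mp (hdisj a.2 a'.2 (Subtype.coe_ne_coe.mpr hne)) (h a ha) (h a' ha')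
      rw [hcover, card_univ]
      exact (card_le_univ u).trans (by simpa using hs)
  obtain ⟨f, hf, hfF⟩ := (all_card_le_biUnion_card_iff_exists_injective _).mp hall
  refine ⟨fun a => if h : a ∈ s then f ⟨a, h⟩ else Classical.arbitrary β, ?_,
    fun a ha => ?_⟩
  · intro a ha a' ha' h
    simp only [mem_coe] at ha ha'
    simp only [dif_pos ha, dif_pos ha'] at h
    exact congrArg Subtype.val (hf h)
  · simpa [dif_pos ha] using hfF ⟨a, ha⟩

namespace SimpleGraph

open Finset

variable {V ι : Type*} {G : SimpleGraph V}

theorem cliqueNum_pos [Finite V] [Nonempty V] : 0 < G.cliqueNum := by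
  inhabit V
  have : #{default} ≤ G.cliqueNum := IsClique.card_le_cliqueNum (tc := by simp)
  exact Nat.lt_of_lt_of_le one_pos (by simpa using this)

/-- The fibres of `o` are cliques and, apart from those, the only edges join the hub fibre `i` to
another fibre, each such fibre being joined to the hub by a matching. -/
structure IsMatchedToHub (G : SimpleGraph V) (o : V → ι) (i : ι) : Prop where
  adj_of_eq : ∀ ⦃v w⦄, v ≠ w → o v = o w → G.Adj v w
  eq_of_adj : ∀ ⦃v w⦄, G.Adj v w → o v ≠ i → o w ≠ i → o v = o w
  eq_iff_eq : ∀ ⦃w w' u u'⦄, o w = o w' → o w ≠ i → o u = i → o u' = i →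
    G.Adj w u → G.Adj w' u' → (w = w' ↔ u = u')

namespace IsMatchedToHub

variable {o : V → ι} {i : ι}

theorem induce (hG : G.IsMatchedToHub o i) (s : Set V) :
    (G.induce s).IsMatchedToHub (o ∘ (↑)) i where
  adj_of_eq _ _ hne h := hG.adj_of_eq (Subtype.coe_ne_coe.mpr hne) h
  eq_of_adj _ _ h := hG.eq_of_adj h
  eq_iff_eq _ _ _ _ hw hwi hu hu' h h' := by
    simpa only [Subtype.ext_iff] using hG.eq_iff_eq hw hwi hu hu' h h'

theorem card_fibre_le [Fintype V] [DecidableEq ι] (hG : G.IsMatchedToHub o i) (j : ι) :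
    #({v | o v = j} : Finset V) ≤ G.cliqueNum :=
  IsClique.card_le_cliqueNum (tc := fun v hv w hw hne => hG.adj_of_eq hne (by simp_all))

theorem exists_injOn_fibre_avoiding [Finite V] [Nonempty V] (hG : G.IsMatchedToHub o i)
    {c : V → Fin G.cliqueNum} (hc : Set.InjOn c {u | o u = i}) {j : ι} (hj : j ≠ i) :
    ∃ g : V → Fin G.cliqueNum, Set.InjOn g {v | o v = j} ∧
      ∀ ⦃u w⦄, G.Adj u w → o u = i → o w = j → c u ≠ g w := by
  classical
  cases nonempty_fintype V
  have : Nonempty (Fin G.cliqueNum) := Fin.pos_iff_nonempty.mp cliqueNum_pos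
  let hubNbrs (w : V) : Finset V := {u | o u = i ∧ G.Adj w u}
  have card_hubNbrs_lt (w : V) (hw : o w ≠ i) : #(hubNbrs w) < G.cliqueNum := by
    have hsub : (hubNbrs w : Set V).Subsingleton := fun u hu u' hu' => by
      simp only [coe_filter, mem_univ, true_and, hubNbrs] at hu hu'
      exact (hG.eq_iff_eq rfl hw hu.1 hu'.1 hu.2 hu'.2).mp rfl
    have hclique : G.IsClique (insert w (hubNbrs w) : Set V) :=
      isClique_insert.mpr ⟨IsClique.of_subsingleton hsub, fun u hu _ => (mem_filter.mp hu).2.2⟩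
    have hw_notMem : w ∉ hubNbrs w := fun h => hw (mem_filter.mp h).2.1
    calc #(hubNbrs w) < #(insert w (hubNbrs w)) := by simp [card_insert_of_notMem hw_notMem]
      _ ≤ G.cliqueNum := IsClique.card_le_cliqueNum (tc := by simpa using hclique)
  obtain ⟨g, hg_inj, hg_avoid⟩ := exists_injOn_forall_notMem (s := {v | o v = j})
    (fun w => (hubNbrs w).image c) (by simpa using hG.card_fibre_le j)
    (fun w hw => card_image_le.trans_lt (by simpa using card_hubNbrs_lt w (by simp_all)))
    (fun w hw w' hw' hne => Finset.disjoint_left.mpr fun x hx hx' => by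
      replace hw : o w = j := by simpa using hw
      replace hw' : o w' = j := by simpa using hw'
      obtain ⟨u, hu, rfl⟩ := mem_image.mp hx
      obtain ⟨u', hu', hcu⟩ := mem_image.mp hx'
      simp only [mem_filter, mem_univ, true_and, hubNbrs] at hu hu'
      exact hne ((hG.eq_iff_eq (hw.trans hw'.symm) (by simp_all) hu.1 hu'.1 hu.2 hu'.2).mpr
        (hc hu'.1 hu.1 hcu).symm))
  refine ⟨g, by simpa using hg_inj, fun u w huw hu hw hcg => hg_avoid w (by simpa using hw) ?_⟩
  exact mem_image.mpr ⟨u, by simp [hubNbrs, hu, huw.symm], hcg⟩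

theorem colorable_cliqueNum [Finite V] (hG : G.IsMatchedToHub o i) :
    G.Colorable G.cliqueNum := by
  classical
  cases nonempty_fintype V
  rcases isEmpty_or_nonempty V with hV | hV
  · exact .of_isEmpty _
  have : Nonempty (Fin G.cliqueNum) := Fin.pos_iff_nonempty.mp cliqueNum_pos
  obtain ⟨c, hc⟩ : ∃ c : V → Fin G.cliqueNum, Set.InjOn c {u | o u = i} := by
    have hcard : Fintype.card {u // o u = i} ≤ Fintype.card (Fin G.cliqueNum) := by
      simpa [Fintype.card_subtype] using hG.card_fibre_le i
    exact Set.exists_injOn_iff_injective.mpr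
      ⟨_, (Function.Embedding.nonempty_of_card_le hcard).some.injective⟩
  choose g hg_inj hg_avoid using fun j (hj : j ≠ i) => hG.exists_injOn_fibre_avoiding hc hj
  refine ⟨.mk (fun v => if h : o v = i then c v else g (o v) h v) fun {v w} hvw => ?_⟩
  have hub_ne {u w : V} (huw : G.Adj u w) (hu : o u = i) (hw : o w ≠ i) : c u ≠ g (o w) hw w :=
    hg_avoid (o w) hw huw hu rfl
  by_cases hv : o v = i <;> by_cases hw : o w = i <;> simp only [hv, hw, dite_true, dite_false]
  · exact hc.ne hv hw hvw.ne
  · exact hub_ne hvw hv hw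
  · exact (hub_ne hvw.symm hw hv).symm
  · have hvw_fibre := hG.eq_of_adj hvw hv hw
    convert (hg_inj (o v) hv).ne rfl hvw_fibre.symm hvw.ne using 2
    exact hvw_fibre.symm

theorem isPerfect [Finite V] (hG : G.IsMatchedToHub o i) : G.IsPerfect := fun s =>
  le_antisymm (hG.induce s).colorable_cliqueNum.chromaticNumber_le cliqueNum_le_chromaticNumber

end IsMatchedToHub

end SimpleGraph

namespace ECG

variable {K N : ℕ}

theorem adj_of_output_eq {v w : CGVert K N} (hne : v ≠ w) (h : v.2.2 = w.2.2) :
    (ECG K N).Adj v w := by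
  refine ⟨hne, ?_⟩
  by_cases hin : v.2.1 = w.2.1
  · refine .inl ⟨hin, ?_⟩
    have hb : v.1 ≠ w.1 := fun hb => hne (Prod.ext hb (Prod.ext hin h))
    cases hv : v.1 <;> cases hw : w.1 <;> simp_all
  · exact .inr ⟨h, hin⟩

theorem adj_iff_of_broadcast {w u : CGVert K N} (hw : w.1 = true) (h : w.2.2 ≠ u.2.2) :
    (ECG K N).Adj w u ↔ u.1 = false ∧ w.2.1 = u.2.1 := by
  simp only [ECG, hw, Bool.true_eq_false, false_or, h, false_and, or_false]
  exact ⟨fun h => ⟨h.2.2, h.2.1⟩, fun h' => ⟨fun hwu => h (hwu ▸ rfl), h'.2, h'.1⟩⟩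

theorem isMatchedToHub_induce (i : Fin N) :
    ((ECG K N).induce {v | v.1 = true ∨ v.2.2 = i}).IsMatchedToHub (fun v => v.1.2.2) i where
  adj_of_eq _ _ hne h := adj_of_output_eq (Subtype.coe_ne_coe.mpr hne) h
  eq_of_adj v w h hv hw := by
    by_contra hvw
    have hvb : v.1.1 = true := v.2.resolve_right hv
    have hwb : w.1.1 = true := w.2.resolve_right hw
    exact Bool.false_ne_true (((adj_iff_of_broadcast hvb hvw).mp h).1.symm.trans hwb)
  eq_iff_eq w w' u u' hww' hw hu hu' h h' := by
    have hwb : w.1.1 = true := w.2.resolve_right hw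
    have hw'b : w'.1.1 = true := w'.2.resolve_right fun h => hw (hww'.trans h)
    obtain ⟨hub, hin⟩ := (adj_iff_of_broadcast hwb fun h => hw (h.trans hu)).mp h
    obtain ⟨hu'b, hin'⟩ :=
      (adj_iff_of_broadcast hw'b fun h => hw (hww'.trans (h.trans hu'))).mp h'
    simp only [Subtype.ext_iff, Prod.ext_iff]
    simp_all

end ECG

theorem stmt6_general (K N : ℕ) (i : Fin N) :
    ((ECG K N).induce {v : CGVert K N | v.1 = true ∨ v.2.2 = i}).IsPerfect :=
  (ECG.isMatchedToHub_induce i).isPerfect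

theorem stmt6 (K N : ℕ) (hK : 0 < K) (hN : 0 < N) (i : Fin N) :
    ((ECG K N).induce {v : CGVert K N | v.1 = true ∨ v.2.2 = i}).IsPerfect :=
  stmt6_general K N i
end

section
/- Let w ∈ ℝ^{V(G_{2,3})} be the vector assigning weight 1/2 to each of the five vertices u_{11}, b_{12}, u_{22}, u_{23}, b_{13} of the enhanced conflict graph G_{2,3} and weight 0 to every other vertex. Then w ∈ QSTAB(G_{2,3}), and for every real t with 0 ≤ t < 5/4, w ∉ t·STAB(G_{2,3}). In particular, min{t : QSTAB(G_{2,3}) ⊆ t·STAB(G_{2,3})} ≥ 5/4. -/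
open SimpleGraph Pointwise

/-- The weight vector assigning `1/2` to each of the five vertices
`u₁₁, b₁₂, u₂₂, u₂₃, b₁₃` of the odd hole of `G_{2,3}` and `0` elsewhere. -/
noncomputable def w23 : CGVert 2 3 → ℝ := fun v =>
  if v = (false, 0, 0) ∨ v = (true, 0, 1) ∨ v = (false, 1, 1) ∨ v = (false, 1, 2) ∨
      v = (true, 0, 2)
  then 1 / 2 else 0


/-!
The five vertices `u₁₁, b₁₂, u₂₂, u₂₃, b₁₃` induce a 5-cycle in `G_{2,3}`. A 5-cycle has no
triangle, so every clique meets it in at most two vertices and half its indicator vector lies in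
`QSTAB`. But every stable set meets it in at most two vertices too, so the sum of these five
coordinates is at most `2` on `STAB`, while for the half-indicator it is `5/2`; hence the
half-indicator lies in `t • STAB` only if `2 t ≥ 5/2`.
-/

instance (K N : ℕ) : DecidableRel (ECG K N).Adj := fun v w =>
  inferInstanceAs (Decidable (v ≠ w ∧ ((v.2.1 = w.2.1 ∧ (v.1 = false ∨ w.1 = false)) ∨
     (v.2.2 = w.2.2 ∧ v.2.1 ≠ w.2.1))))

section Polytopes

variable {V : Type*} {G : SimpleGraph V}

lemma nonneg_of_mem_STAB {x : V → ℝ} (hx : x ∈ STAB G) (v : V) : 0 ≤ x v := by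
  suffices STAB G ⊆ {x | 0 ≤ x v} from this hx
  refine convexHull_min ?_
    (convex_halfSpace_ge (LinearMap.proj (R := ℝ) (φ := fun _ : V => ℝ) v).isLinear 0)
  rintro _ ⟨S, -, rfl⟩
  exact Set.indicator_nonneg (fun _ _ => zero_le_one (α := ℝ)) v

lemma sum_le_of_mem_STAB {C : Finset V} {k : ℕ}
    (hC : ∀ T ⊆ C, G.IsIndepSet (T : Set V) → T.card ≤ k)
    {x : V → ℝ} (hx : x ∈ STAB G) : ∑ v ∈ C, x v ≤ k := by
  classical
  suffices STAB G ⊆ {x | ∑ v ∈ C, x v ≤ k} from this hx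
  refine convexHull_min ?_ (convex_halfSpace_le (f := fun x : V → ℝ => ∑ v ∈ C, x v)
    ⟨fun x y => Finset.sum_add_distrib, fun c x => by simp [Finset.mul_sum]⟩ k)
  rintro _ ⟨S, hS, rfl⟩
  have hT : G.IsIndepSet ((C.filter (· ∈ S) : Finset V) : Set V) := by
    intro v hv w hw _
    simp only [Finset.coe_filter, Set.mem_ofPred_eq] at hv hw
    exact hS v hv.2 w hw.2
  show ∑ v ∈ C, S.indicator (fun _ => (1 : ℝ)) v ≤ k
  rw [Finset.sum_indicator_eq_sum_filter]
  simpa using hC _ (Finset.filter_subset _ _) hT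

lemma indicator_mem_QSTAB (C : Finset V) (k : ℕ)
    (hC : ∀ T ⊆ C, G.IsClique (T : Set V) → T.card ≤ k) :
    (C : Set V).indicator (fun _ => 1 / (k : ℝ)) ∈ QSTAB G := by
  classical
  refine ⟨fun v => Set.indicator_nonneg (fun _ _ => by positivity) v, fun Q hQ => ?_⟩
  rw [Finset.sum_indicator_eq_sum_filter, Finset.sum_const, nsmul_eq_mul, ← div_eq_mul_one_div]
  refine div_le_one_of_le₀ ?_ k.cast_nonneg
  refine Nat.cast_le.2 (hC _ (fun v hv => ?_) (hQ.subset fun v hv => ?_))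
  · simpa using (Finset.mem_filter.1 hv).2
  · exact (Finset.mem_filter.1 hv).1

lemma sum_le_mul_of_mem_smul_STAB {C : Finset V} {k : ℕ}
    (hC : ∀ T ⊆ C, G.IsIndepSet (T : Set V) → T.card ≤ k)
    {t : ℝ} {x : V → ℝ} (hx : x ∈ t • STAB G) (hpos : 0 < ∑ v ∈ C, x v) :
    ∑ v ∈ C, x v ≤ t * k := by
  obtain ⟨y, hy, rfl⟩ := Set.mem_smul_set.1 hx
  have hsum : ∑ v ∈ C, (t • y) v = t * ∑ v ∈ C, y v := by simp [Finset.mul_sum]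
  have hy_nonneg : 0 ≤ ∑ v ∈ C, y v := Finset.sum_nonneg fun v _ => nonneg_of_mem_STAB hy v
  have hy_le : ∑ v ∈ C, y v ≤ k := sum_le_of_mem_STAB hC hy
  rw [hsum] at hpos ⊢
  have ht : 0 < t := pos_of_mul_pos_left hpos hy_nonneg
  exact mul_le_mul_of_nonneg_left hy_le ht.le

end Polytopes

def hole23 : Finset (CGVert 2 3) :=
  {(false, 0, 0), (true, 0, 1), (false, 1, 1), (false, 1, 2), (true, 0, 2)}

lemma hole23_indepSet_card_le (T : Finset (CGVert 2 3)) (hT : T ⊆ hole23)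
    (hind : (ECG 2 3).IsIndepSet (T : Set (CGVert 2 3))) : T.card ≤ 2 := by
  have : ∀ T ∈ hole23.powerset, (∀ v ∈ T, ∀ w ∈ T, ¬ (ECG 2 3).Adj v w) → T.card ≤ 2 := by
    decide
  exact this T (Finset.mem_powerset.2 hT) fun v hv w hw hvw =>
    hind hv hw ((ECG 2 3).ne_of_adj hvw) hvw

lemma hole23_isClique_card_le (T : Finset (CGVert 2 3)) (hT : T ⊆ hole23)
    (hcl : (ECG 2 3).IsClique (T : Set (CGVert 2 3))) : T.card ≤ 2 := by
  have : ∀ T ∈ hole23.powerset, (∀ v ∈ T, ∀ w ∈ T, v ≠ w → (ECG 2 3).Adj v w) → T.card ≤ 2 := by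
    decide
  exact this T (Finset.mem_powerset.2 hT) fun v hv w hw hvw => hcl hv hw hvw

lemma w23_eq_indicator :
    w23 = (hole23 : Set (CGVert 2 3)).indicator (fun _ => 1 / ((2 : ℕ) : ℝ)) := by
  funext v
  simp [w23, Set.indicator, hole23]

lemma w23_mem_QSTAB : w23 ∈ QSTAB (ECG 2 3) :=
  w23_eq_indicator ▸ indicator_mem_QSTAB hole23 2 hole23_isClique_card_le

lemma sum_hole23_w23 : ∑ v ∈ hole23, w23 v = 5 / 2 := by
  rw [w23_eq_indicator, Finset.sum_indicator_subset _ subset_rfl, Finset.sum_const,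
    show hole23.card = 5 from rfl]
  norm_num

lemma five_fourths_le_of_w23_mem_smul_STAB {t : ℝ} (hw : w23 ∈ t • STAB (ECG 2 3)) :
    5 / 4 ≤ t := by
  have h := sum_le_mul_of_mem_smul_STAB hole23_indepSet_card_le hw
    (by rw [sum_hole23_w23]; norm_num)
  rw [sum_hole23_w23] at h
  push_cast at h
  linarith

theorem stmt18 :
    w23 ∈ QSTAB (ECG 2 3) ∧
    (∀ t : ℝ, 0 ≤ t → t < 5 / 4 → w23 ∉ t • STAB (ECG 2 3)) ∧
    (∀ t : ℝ, QSTAB (ECG 2 3) ⊆ t • STAB (ECG 2 3) → 5 / 4 ≤ t) :=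
  ⟨w23_mem_QSTAB,
    fun _ _ ht hw => (five_fourths_le_of_w23_mem_smul_STAB hw).not_gt ht,
    fun _ hsub => five_fourths_le_of_w23_mem_smul_STAB (hsub w23_mem_QSTAB)⟩
end
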